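/- Fix L > 0, r ≥ 1, nonzero integers N_1,...,N_r, M_1,...,M_r, and signs ε_0, ε_1, ..., ε_{2r−1} ∈ {+1,−1} (indices of ε read modulo 2r, so ε_{−1} means ε_{2r−1}). Set ν_j = 1/(2|N_j|) and μ_j = 1/(2|M_j|). For k ∈ ℕ define the 2×2 matrices A_j(k) = [[1 − 4L²k²N_jM_jε_{2j−2}ε_{2j−1}, 2LkM_jε_{2j−1}],[−2LkN_jε_{2j−2}, 1]] and the vectors v_j(k) = (4L²k²ε_{2j−1}M_jN_j(1−ν_j) + 2LkM_j(1−μ_j), 2LkN_j(1−ν_j)) ∈ ℝ², and put Ā(k) = A_r(k)···A_1(k) and v̄(k) = v_r(k) + Σ_{j=1}^{r−1} A_r(k)···A_{j+1}(k)·v_j(k). Then there exists k₀ such that for all k ≥ k₀ the matrix Ā(k) − I is invertible, and the unique solution z⁰(k) = (x_0(k),y_0(k)) of (Ā(k) − I)z = −v̄(k), together with the vectors defined recursively by z^{j+1}(k) = A_{j+1}(k)z^{j}(k) + v_{j+1}(k) for 0 ≤ j ≤ r−2, satisfies the asymptotics z^{j}(k) = (ε_{2j}(1−ν_{j+1}),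 −ε_{2j−1}(1−μ_j)) + O(1/k) as k → ∞ for every 0 ≤ j ≤ r−1, where μ_0 means μ_r. In particular, for all sufficiently large k, the sign of the first coordinate of z^{j}(k) equals ε_{2j}. -/

import Mathlib

/-- The matrix
`A_j(k) = [[1 − 4L²k²N_jM_jε_{2j−2}ε_{2j−1}, 2LkM_jε_{2j−1}],[−2LkN_jε_{2j−2}, 1]]`. -/
noncomputable def ebA (L : ℝ) (N M : ℕ → ℤ) (ε : ℕ → ℝ) (k j : ℕ) :
    Matrix (Fin 2) (Fin 2) ℝ :=
  !![1 - 4 * L ^ 2 * (k : ℝ) ^ 2 * (N j : ℝ) * (M j : ℝ) * ε (2 * j - 2) * ε (2 * j - 1),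
      2 * L * (k : ℝ) * (M j : ℝ) * ε (2 * j - 1);
     -(2 * L * (k : ℝ) * (N j : ℝ) * ε (2 * j - 2)), 1]

/-- The vector `v_j(k) = (4L²k²ε_{2j−1}M_jN_j(1−ν_j) + 2LkM_j(1−μ_j), 2LkN_j(1−ν_j))`,
where `ν_j = 1/(2|N_j|)` and `μ_j = 1/(2|M_j|)`. -/
noncomputable def ebV (L : ℝ) (N M : ℕ → ℤ) (ε : ℕ → ℝ) (k j : ℕ) : Fin 2 → ℝ :=
  ![4 * L ^ 2 * (k : ℝ) ^ 2 * ε (2 * j - 1) * (M j : ℝ) * (N j : ℝ) *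
        (1 - 1 / (2 * |(N j : ℝ)|)) +
      2 * L * (k : ℝ) * (M j : ℝ) * (1 - 1 / (2 * |(M j : ℝ)|)),
    2 * L * (k : ℝ) * (N j : ℝ) * (1 - 1 / (2 * |(N j : ℝ)|))]

/-- The descending product `A_j(k)⋯A_i(k)` (factors of index `< i` omitted); in
particular `ebProd L N M ε k 1 r = Ā(k) = A_r(k)⋯A_1(k)`. -/
noncomputable def ebProd (L : ℝ) (N M : ℕ → ℤ) (ε : ℕ → ℝ) (k i : ℕ) :
    ℕ → Matrix (Fin 2) (Fin 2) ℝ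
  | 0 => 1
  | j + 1 => (if i ≤ j + 1 then ebA L N M ε k (j + 1) else 1) * ebProd L N M ε k i j

/-- The vector `v̄(k) = v_r(k) + Σ_{j=1}^{r−1} A_r(k)⋯A_{j+1}(k)·v_j(k)`. -/
noncomputable def ebVbar (L : ℝ) (N M : ℕ → ℤ) (ε : ℕ → ℝ) (k r : ℕ) : Fin 2 → ℝ :=
  ebV L N M ε k r +
    ∑ j ∈ Finset.Icc 1 (r - 1), (ebProd L N M ε k (j + 1) r).mulVec (ebV L N M ε k j)

section Aux

variable (L : ℝ) (N M : ℕ → ℤ) (ε : ℕ → ℝ) (k : ℕ)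

lemma eb_step1 (j : ℕ) (v : Fin 2 → ℝ) (s : ℝ) :
    ((ebA L N M ε k j).mulVec v + s • ebV L N M ε k j) 1
      = -(2*L*k*(N j:ℝ)*ε (2*j-2)) * v 0 + v 1
        + s * (2*L*k*(N j:ℝ)*(1 - 1/(2*|(N j:ℝ)|))) := by
  simp [ebA, ebV, Matrix.mulVec, dotProduct, Fin.sum_univ_two, Matrix.vecHead, Matrix.vecTail]

lemma eb_step0 (j : ℕ) (v : Fin 2 → ℝ) (s : ℝ) :
    ((ebA L N M ε k j).mulVec v + s • ebV L N M ε k j) 0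
      = (1 - 4*L^2*(k:ℝ)^2*(N j:ℝ)*(M j:ℝ)*ε (2*j-2)*ε (2*j-1)) * v 0
        + (2*L*k*(M j:ℝ)*ε (2*j-1)) * v 1
        + s * (4*L^2*(k:ℝ)^2*ε (2*j-1)*(M j:ℝ)*(N j:ℝ)*(1 - 1/(2*|(N j:ℝ)|))
            + 2*L*k*(M j:ℝ)*(1 - 1/(2*|(M j:ℝ)|))) := by
  simp [ebA, ebV, Matrix.mulVec, dotProduct, Fin.sum_univ_two, Matrix.vecHead, Matrix.vecTail]

lemma ebProd_of_lt : ∀ m i : ℕ, m < i → ebProd L N M ε k i m = 1 := by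
  intro m
  induction m with
  | zero => intro i _; rfl
  | succ n ih =>
      intro i h
      rw [ebProd, if_neg (by omega), one_mul, ih i (by omega)]

lemma ebProd_succ (i n : ℕ) (h : i ≤ n + 1) :
    ebProd L N M ε k i (n + 1) = ebA L N M ε k (n + 1) * ebProd L N M ε k i n := by
  rw [ebProd, if_pos h]

lemma eb_orbit_formula (w : ℕ → Fin 2 → ℝ)
    (hrec : ∀ j, w (j + 1) = (ebA L N M ε k (j + 1)).mulVec (w j) + ebV L N M ε k (j + 1)) :
    ∀ m, w m = (ebProd L N M ε k 1 m).mulVec (w 0)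
        + ∑ j ∈ Finset.Icc 1 m, (ebProd L N M ε k (j + 1) m).mulVec (ebV L N M ε k j) := by
  intro m
  induction m with
  | zero => simp [ebProd, Matrix.one_mulVec]
  | succ n ih =>
      rw [hrec n, ih, Matrix.mulVec_add,
        Finset.sum_Icc_succ_top (by omega : 1 ≤ n + 1)]
      have hsum : (ebA L N M ε k (n + 1)).mulVec
            (∑ j ∈ Finset.Icc 1 n, (ebProd L N M ε k (j + 1) n).mulVec (ebV L N M ε k j))
          = ∑ j ∈ Finset.Icc 1 n,
              (ebA L N M ε k (n + 1)).mulVec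
                ((ebProd L N M ε k (j + 1) n).mulVec (ebV L N M ε k j)) := by
        simp only [← Matrix.mulVecLin_apply, map_sum]
      rw [hsum, ebProd_of_lt L N M ε k (n + 1) (n + 2) (by omega), Matrix.one_mulVec,
        Matrix.mulVec_mulVec, ← ebProd_succ L N M ε k 1 n (by omega)]
      have hcongr : ∀ j ∈ Finset.Icc 1 n,
          (ebA L N M ε k (n + 1)).mulVec ((ebProd L N M ε k (j + 1) n).mulVec (ebV L N M ε k j))
            = (ebProd L N M ε k (j + 1) (n + 1)).mulVec (ebV L N M ε k j) := by
        intro j hj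
        rw [Matrix.mulVec_mulVec, ← ebProd_succ L N M ε k (j + 1) n
          (by simp only [Finset.mem_Icc] at hj; omega)]
      rw [Finset.sum_congr rfl hcongr]
      abel

lemma ebVbar_eq (r : ℕ) (hr : 1 ≤ r) :
    ebVbar L N M ε k r
      = ∑ j ∈ Finset.Icc 1 r, (ebProd L N M ε k (j + 1) r).mulVec (ebV L N M ε k j) := by
  obtain ⟨n, rfl⟩ : ∃ n, r = n + 1 := ⟨r - 1, by omega⟩
  rw [ebVbar, Finset.sum_Icc_succ_top (by omega : 1 ≤ n + 1),
    ebProd_of_lt L N M ε k (n + 1) (n + 2) (by omega), Matrix.one_mulVec]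
  simp only [Nat.add_sub_cancel]
  exact add_comm _ _

end Aux

/-- Key contraction estimate for periodic orbits of the affine recursion. -/
lemma eb_key (L : ℝ) (hL : 0 < L) (r : ℕ) (hr : 1 ≤ r)
    (N M : ℕ → ℤ)
    (hN : ∀ j, 1 ≤ j → j ≤ r → N j ≠ 0) (hM : ∀ j, 1 ≤ j → j ≤ r → M j ≠ 0)
    (ε : ℕ → ℝ) (hε : ∀ i, ε i = 1 ∨ ε i = -1)
    (k : ℕ) (hk : 2 ≤ L * k) (s : ℝ) (hs : |s| ≤ 1)
    (w : ℕ → Fin 2 → ℝ)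
    (hrec : ∀ j < r, w (j + 1) = (ebA L N M ε k (j + 1)).mulVec (w j) + s • ebV L N M ε k (j + 1))
    (hper : w r = w 0) :
    (∀ j < r, |w j 0 - s * (ε (2 * j) * (1 - 1 / (2 * |(N (j + 1) : ℝ)|)))|
        ≤ 2 * |s| / (L * k)) ∧
    (∀ j, 1 ≤ j → j ≤ r →
      |w j 1 + s * (ε (2 * j - 1) * (1 - 1 / (2 * |(M j : ℝ)|)))| ≤ 2 * |s| / (L * k)) := by
  have hk0 : (0 : ℝ) < k := by nlinarith
  have hLk : (0 : ℝ) < L * k := by positivity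
  have habs_e : ∀ i, |ε i| = 1 := by
    intro i; rcases hε i with h | h <;> rw [h] <;> norm_num
  have hesq : ∀ i, ε i * ε i = 1 := by
    intro i; rcases hε i with h | h <;> rw [h] <;> norm_num
  have hNabs : ∀ j, 1 ≤ j → j ≤ r → (1 : ℝ) ≤ |(N j : ℝ)| := by
    intro j h1 h2
    have h := hN j h1 h2
    have : (1 : ℤ) ≤ |N j| := Int.one_le_abs h
    calc (1:ℝ) ≤ ((|N j| : ℤ) : ℝ) := by exact_mod_cast this
    _ = |(N j : ℝ)| := by push_cast; ring
  have hMabs : ∀ j, 1 ≤ j → j ≤ r → (1 : ℝ) ≤ |(M j : ℝ)| := by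
    intro j h1 h2
    have h := hM j h1 h2
    have : (1 : ℤ) ≤ |M j| := Int.one_le_abs h
    calc (1:ℝ) ≤ ((|M j| : ℤ) : ℝ) := by exact_mod_cast this
    _ = |(M j : ℝ)| := by push_cast; ring
  -- the absolute factors (1 - ν) lie in [1/2, 1)
  have hhalf : ∀ x : ℝ, 1 ≤ x → 0 < 1 / (2 * x) ∧ 1 / (2 * x) ≤ 1 / 2 := by
    intro x hx
    constructor
    · positivity
    · rw [div_le_div_iff₀ (by linarith) (by norm_num)]; nlinarith
  have hnu : ∀ j, 1 ≤ j → j ≤ r → |1 - 1 / (2 * |(N j : ℝ)|)| ≤ 1 := by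
    intro j h1 h2
    obtain ⟨ha, hb⟩ := hhalf _ (hNabs j h1 h2)
    rw [abs_le]; constructor <;> linarith
  have hmu : ∀ j, 1 ≤ j → j ≤ r → |1 - 1 / (2 * |(M j : ℝ)|)| ≤ 1 := by
    intro j h1 h2
    obtain ⟨ha, hb⟩ := hhalf _ (hMabs j h1 h2)
    rw [abs_le]; constructor <;> linarith
  -- scalar form of the recursion
  have e2 : ∀ j < r, w (j+1) 1
      = -(2*L*k*(N (j+1):ℝ)*ε (2*j)) * w j 0 + w j 1
        + s * (2*L*k*(N (j+1):ℝ)*(1 - 1/(2*|(N (j+1):ℝ)|))) := by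
    intro j hj
    have h := congrFun (hrec j hj) 1
    rw [eb_step1] at h
    simpa only [show 2*(j+1)-2 = 2*j from by omega] using h
  have e1 : ∀ j < r, w (j+1) 0
      = (1 - 4*L^2*(k:ℝ)^2*(N (j+1):ℝ)*(M (j+1):ℝ)*ε (2*j)*ε (2*j+1)) * w j 0
        + (2*L*k*(M (j+1):ℝ)*ε (2*j+1)) * w j 1
        + s * (4*L^2*(k:ℝ)^2*ε (2*j+1)*(M (j+1):ℝ)*(N (j+1):ℝ)*(1 - 1/(2*|(N (j+1):ℝ)|))
            + 2*L*k*(M (j+1):ℝ)*(1 - 1/(2*|(M (j+1):ℝ)|))) := by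
    intro j hj
    have h := congrFun (hrec j hj) 0
    rw [eb_step0] at h
    simpa only [show 2*(j+1)-2 = 2*j from by omega,
      show 2*(j+1)-1 = 2*j+1 from by omega] using h
  -- multiplied-out key identities
  have keyx : ∀ j < r, (2*L*k*(N (j+1):ℝ))
        * (w j 0 - s * (ε (2*j) * (1 - 1/(2*|(N (j+1):ℝ)|))))
      = -(ε (2*j)) * (w (j+1) 1 - w j 1) := by
    intro j hj
    linear_combination (ε (2*j)) * e2 j hj
      - (2*L*(k:ℝ)*(N (j+1):ℝ)*(w j 0)) * hesq (2*j)
  have id2 : ∀ j < r, w (j+1) 0 - w j 0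
      = (2*L*k*(M (j+1):ℝ)*ε (2*j+1)) * w (j+1) 1
        + s * (2*L*k*(M (j+1):ℝ)*(1 - 1/(2*|(M (j+1):ℝ)|))) := by
    intro j hj
    linear_combination e1 j hj - (2*L*(k:ℝ)*(M (j+1):ℝ)*ε (2*j+1)) * e2 j hj
  have keyy : ∀ j < r, (2*L*k*(M (j+1):ℝ))
        * (w (j+1) 1 + s * (ε (2*j+1) * (1 - 1/(2*|(M (j+1):ℝ)|))))
      = (ε (2*j+1)) * (w (j+1) 0 - w j 0) := by
    intro j hj
    linear_combination (-(ε (2*j+1))) * id2 j hj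
      - (2*L*(k:ℝ)*(M (j+1):ℝ)*(w (j+1) 1)) * hesq (2*j+1)
  -- the sup of all coordinates along the orbit
  have hne : (Finset.range (r + 1)).Nonempty := ⟨0, by simp⟩
  set R := (Finset.range (r + 1)).sup' hne (fun j => max |w j 0| |w j 1|) with hRdef
  have hbX : ∀ j, j ≤ r → |w j 0| ≤ R := by
    intro j hj
    exact le_trans (le_max_left _ _)
      (Finset.le_sup' (fun j => max |w j 0| |w j 1|) (Finset.mem_range.2 (by omega)))
  have hbY : ∀ j, j ≤ r → |w j 1| ≤ R := by
    intro j hj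
    exact le_trans (le_max_right _ _)
      (Finset.le_sup' (fun j => max |w j 0| |w j 1|) (Finset.mem_range.2 (by omega)))
  have hR0 : 0 ≤ R := le_trans (abs_nonneg _) (hbX 0 (by omega))
  -- the central small bounds in terms of R
  have hDx : ∀ j < r,
      |w j 0 - s * (ε (2 * j) * (1 - 1 / (2 * |(N (j + 1) : ℝ)|)))| ≤ R / (L * k) := by
    intro j hj
    have hmul := keyx j hj
    have habs := congrArg abs hmul
    simp only [abs_mul, abs_neg, habs_e, one_mul] at habs
    have h2R : |w (j + 1) 1 - w j 1| ≤ 2 * R :=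
      le_trans (abs_sub _ _) (by
        have := hbY (j + 1) (by omega); have := hbY j (by omega); linarith)
    have hden : 2 * (L * k) ≤ |(2:ℝ)| * |L| * |(k:ℝ)| * |(N (j + 1) : ℝ)| := by
      rw [abs_of_pos (by norm_num : (0:ℝ) < 2), abs_of_pos hL, abs_of_pos hk0]
      nlinarith [hNabs (j + 1) (by omega) (by omega)]
    rw [le_div_iff₀ hLk]
    nlinarith [abs_nonneg (w j 0 - s * (ε (2 * j) * (1 - 1 / (2 * |(N (j + 1) : ℝ)|)))),
      abs_nonneg (w (j + 1) 1 - w j 1),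
      mul_nonneg (sub_nonneg.2 hden)
        (abs_nonneg (w j 0 - s * (ε (2 * j) * (1 - 1 / (2 * |(N (j + 1) : ℝ)|)))))]
  have hDy : ∀ j < r,
      |w (j + 1) 1 + s * (ε (2 * j + 1) * (1 - 1 / (2 * |(M (j + 1) : ℝ)|)))| ≤ R / (L * k) := by
    intro j hj
    have hmul := keyy j hj
    have habs := congrArg abs hmul
    simp only [abs_mul, abs_neg, habs_e, one_mul] at habs
    have h2R : |w (j + 1) 0 - w j 0| ≤ 2 * R :=
      le_trans (abs_sub _ _) (by
        have := hbX (j + 1) (by omega); have := hbX j (by omega); linarith)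
    have hden : 2 * (L * k) ≤ |(2:ℝ)| * |L| * |(k:ℝ)| * |(M (j + 1) : ℝ)| := by
      rw [abs_of_pos (by norm_num : (0:ℝ) < 2), abs_of_pos hL, abs_of_pos hk0]
      nlinarith [hMabs (j + 1) (by omega) (by omega)]
    rw [le_div_iff₀ hLk]
    nlinarith [abs_nonneg (w (j + 1) 1 + s * (ε (2 * j + 1) * (1 - 1 / (2 * |(M (j + 1) : ℝ)|)))),
      abs_nonneg (w (j + 1) 0 - w j 0),
      mul_nonneg (sub_nonneg.2 hden)
        (abs_nonneg (w (j + 1) 1 + s * (ε (2 * j + 1) * (1 - 1 / (2 * |(M (j + 1) : ℝ)|)))))]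
  -- a priori coordinate bounds
  have hcX : ∀ j, j ≤ r → |w j 0| ≤ |s| + R / (L * k) := by
    have key0 : ∀ i, i < r → |w i 0| ≤ |s| + R / (L * k) := by
      intro i hi
      have h := hDx i hi
      have hsmall : |s * (ε (2 * i) * (1 - 1 / (2 * |(N (i + 1) : ℝ)|)))| ≤ |s| := by
        rw [abs_mul, abs_mul, habs_e, one_mul]
        have := hnu (i + 1) (by omega) (by omega)
        nlinarith [abs_nonneg s, abs_nonneg (1 - 1 / (2 * |(N (i + 1) : ℝ)|))]
      have tri : |w i 0| ≤ |w i 0 - s * (ε (2 * i) * (1 - 1 / (2 * |(N (i + 1) : ℝ)|)))|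
          + |s * (ε (2 * i) * (1 - 1 / (2 * |(N (i + 1) : ℝ)|)))| := by
        have h2 := abs_add_le (w i 0 - s * (ε (2 * i) * (1 - 1 / (2 * |(N (i + 1) : ℝ)|))))
          (s * (ε (2 * i) * (1 - 1 / (2 * |(N (i + 1) : ℝ)|))))
        have h3 : w i 0 - s * (ε (2 * i) * (1 - 1 / (2 * |(N (i + 1) : ℝ)|)))
            + s * (ε (2 * i) * (1 - 1 / (2 * |(N (i + 1) : ℝ)|))) = w i 0 := by ring
        rw [h3] at h2
        linarith
      linarith
    intro j hj
    rcases lt_or_eq_of_le hj with hlt | heq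
    · exact key0 j hlt
    · have : w j 0 = w 0 0 := by rw [heq, hper]
      rw [this]
      exact key0 0 (by omega)
  have hcY : ∀ j, j ≤ r → |w j 1| ≤ |s| + R / (L * k) := by
    intro j hj
    have key : ∀ i < r, |w (i + 1) 1| ≤ |s| + R / (L * k) := by
      intro i hi
      have h := hDy i hi
      have hsmall : |s * (ε (2 * i + 1) * (1 - 1 / (2 * |(M (i + 1) : ℝ)|)))| ≤ |s| := by
        rw [abs_mul, abs_mul, habs_e, one_mul]
        have := hmu (i + 1) (by omega) (by omega)
        nlinarith [abs_nonneg s, abs_nonneg (1 - 1 / (2 * |(M (i + 1) : ℝ)|))]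
      have tri : |w (i + 1) 1| ≤ |w (i + 1) 1 + s * (ε (2 * i + 1) * (1 - 1 / (2 * |(M (i + 1) : ℝ)|)))|
          + |s * (ε (2 * i + 1) * (1 - 1 / (2 * |(M (i + 1) : ℝ)|)))| := by
        have h2 := abs_add_le (w (i + 1) 1 + s * (ε (2 * i + 1) * (1 - 1 / (2 * |(M (i + 1) : ℝ)|))))
          (-(s * (ε (2 * i + 1) * (1 - 1 / (2 * |(M (i + 1) : ℝ)|)))))
        have h3 : w (i + 1) 1 + s * (ε (2 * i + 1) * (1 - 1 / (2 * |(M (i + 1) : ℝ)|)))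
            + -(s * (ε (2 * i + 1) * (1 - 1 / (2 * |(M (i + 1) : ℝ)|)))) = w (i + 1) 1 := by ring
        rw [h3, abs_neg] at h2
        linarith
      linarith
    rcases Nat.eq_zero_or_pos j with rfl | hj1
    · rw [← hper]
      obtain ⟨n, rfl⟩ : ∃ n, r = n + 1 := ⟨r - 1, by omega⟩
      exact key n (by omega)
    · obtain ⟨i, rfl⟩ : ∃ i, j = i + 1 := ⟨j - 1, by omega⟩
      exact key i (by omega)
  -- contraction: R ≤ 2 |s|
  have hRle : R ≤ |s| + R / (L * k) := by
    apply Finset.sup'_le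
    intro j hj
    rw [Finset.mem_range] at hj
    exact max_le (hcX j (by omega)) (hcY j (by omega))
  have hR2 : R ≤ 2 * |s| := by
    have h3 : R / (L * k) ≤ R / 2 := by
      rw [div_le_div_iff₀ hLk (by norm_num)]
      nlinarith
    linarith
  have hfinal : R / (L * k) ≤ 2 * |s| / (L * k) := by
    gcongr
  constructor
  · intro j hj
    exact le_trans (hDx j hj) hfinal
  · intro j h1 h2
    obtain ⟨i, rfl⟩ : ∃ i, j = i + 1 := ⟨j - 1, by omega⟩
    have := hDy i (by omega)
    have heq : 2 * (i + 1) - 1 = 2 * i + 1 := by omega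
    rw [heq]
    exact le_trans this hfinal


/-- Kernel triviality: `Ā(k) - I` has trivial kernel for large `k`. -/
lemma eb_ker (L : ℝ) (hL : 0 < L) (r : ℕ) (hr : 1 ≤ r)
    (N M : ℕ → ℤ)
    (hN : ∀ j, 1 ≤ j → j ≤ r → N j ≠ 0) (hM : ∀ j, 1 ≤ j → j ≤ r → M j ≠ 0)
    (ε : ℕ → ℝ) (hε : ∀ i, ε i = 1 ∨ ε i = -1)
    (k : ℕ) (hk : 2 ≤ L * k)
    (z : Fin 2 → ℝ) (hz : (ebProd L N M ε k 1 r - 1).mulVec z = 0) : z = 0 := by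
  set o : ℕ → Fin 2 → ℝ := fun j => (ebProd L N M ε k 1 j).mulVec z with ho
  have ho0 : o 0 = z := by simp [ho, ebProd, Matrix.one_mulVec]; ext i; fin_cases i <;> rfl
  have horec : ∀ j < r, o (j + 1)
      = (ebA L N M ε k (j + 1)).mulVec (o j) + (0:ℝ) • ebV L N M ε k (j + 1) := by
    intro j _
    simp only [zero_smul, add_zero, ho]
    rw [ebProd_succ L N M ε k 1 j (by omega), ← Matrix.mulVec_mulVec]
  have hper : o r = o 0 := by
    rw [ho0, ho]
    have h := hz
    rw [Matrix.sub_mulVec, Matrix.one_mulVec, sub_eq_zero] at h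
    exact h
  obtain ⟨hx, hy⟩ := eb_key L hL r hr N M hN hM ε hε k hk 0 (by norm_num) o horec hper
  have hb : 2 * |(0:ℝ)| / (L * k) = 0 := by simp
  funext i
  fin_cases i
  · have := hx 0 (by omega)
    rw [hb] at this
    simp only [zero_mul, sub_zero] at this
    have := abs_nonpos_iff.1 this
    simpa [ho0] using this
  · have := hy r (by omega) (le_refl r)
    rw [hb] at this
    simp only [zero_mul, add_zero] at this
    have := abs_nonpos_iff.1 this
    rw [hper, ho0] at this
    simpa using this

/-- Fixed points of the piecewise-linear egg-beater map: for large `k`, `Ā(k) − I` is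
invertible, and the solution `z⁰(k)` of `(Ā(k) − I)z = −v̄(k)` together with the
recursively defined `z^{j+1}(k) = A_{j+1}(k)z^j(k) + v_{j+1}(k)` (for `0 ≤ j ≤ r−2`)
satisfies `z^j(k) = (ε_{2j}(1−ν_{j+1}), −ε_{2j−1}(1−μ_j)) + O(1/k)`, the indices of `ε`
read modulo `2r` and `μ_0` meaning `μ_r`. In particular the sign of the first coordinate
of `z^j(k)` is `ε_{2j}` for all large `k`. -/
theorem stmt9 (L : ℝ) (hL : 0 < L) (r : ℕ) (hr : 1 ≤ r)
    (N M : ℕ → ℤ)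
    (hN : ∀ j, 1 ≤ j → j ≤ r → N j ≠ 0) (hM : ∀ j, 1 ≤ j → j ≤ r → M j ≠ 0)
    (ε : ℕ → ℝ) (hε : ∀ i, ε i = 1 ∨ ε i = -1) :
    ∃ k₀ : ℕ, ∃ C > (0 : ℝ), ∀ k : ℕ, k₀ ≤ k →
      IsUnit (ebProd L N M ε k 1 r - 1) ∧
      ∀ z : ℕ → (Fin 2 → ℝ),
        (ebProd L N M ε k 1 r - 1).mulVec (z 0) = -(ebVbar L N M ε k r) →
        (∀ j : ℕ, j + 2 ≤ r →
          z (j + 1) = (ebA L N M ε k (j + 1)).mulVec (z j) + ebV L N M ε k (j + 1)) →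
        ∀ j < r,
          |z j 0 - ε ((2 * j) % (2 * r)) * (1 - 1 / (2 * |(N (j + 1) : ℝ)|))| ≤
              C / (k : ℝ) ∧
          |z j 1 - (-(ε ((2 * j + 2 * r - 1) % (2 * r))) *
              (1 - 1 / (2 * |(M (if j = 0 then r else j) : ℝ)|)))| ≤ C / (k : ℝ) ∧
          Real.sign (z j 0) = ε ((2 * j) % (2 * r)) := by
  refine ⟨⌈(5:ℝ)/L⌉₊ + 1, 2/L, by positivity, ?_⟩
  intro k hk
  have hk5 : 5 ≤ L * k := by
    have h1 : (5:ℝ)/L ≤ (⌈(5:ℝ)/L⌉₊ : ℝ) := Nat.le_ceil _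
    have h2 : ((⌈(5:ℝ)/L⌉₊ : ℝ) + 1) ≤ (k:ℝ) := by exact_mod_cast hk
    have h3 : (5:ℝ)/L ≤ (k:ℝ) := by linarith
    rw [div_le_iff₀ hL] at h3
    linarith [h3]
  have hk2 : 2 ≤ L * k := by linarith
  have hk0 : (0:ℝ) < k := by nlinarith
  have hLk : (0:ℝ) < L * k := by positivity
  have hunit : IsUnit (ebProd L N M ε k 1 r - 1) := by
    rw [← Matrix.mulVec_injective_iff_isUnit]
    intro u v huv
    have h0 : (ebProd L N M ε k 1 r - 1).mulVec (u - v) = 0 := by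
      rw [Matrix.mulVec_sub, huv, sub_self]
    have := eb_ker L hL r hr N M hN hM ε hε k hk2 (u - v) h0
    exact sub_eq_zero.1 this
  refine ⟨hunit, ?_⟩
  intro z hz0 hzrec
  -- the full orbit
  set o : ℕ → Fin 2 → ℝ := fun j =>
    Nat.rec (z 0) (fun i oi => (ebA L N M ε k (i + 1)).mulVec oi + ebV L N M ε k (i + 1)) j
    with hodef
  have o_zero : o 0 = z 0 := rfl
  have o_succ : ∀ i, o (i + 1) = (ebA L N M ε k (i + 1)).mulVec (o i) + ebV L N M ε k (i + 1) :=
    fun i => rfl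
  have hoz : ∀ j, j < r → o j = z j := by
    intro j
    induction j with
    | zero => intro _; rfl
    | succ i ih =>
        intro h
        rw [o_succ, ih (by omega), hzrec i (by omega)]
  have hper : o r = o 0 := by
    have hform := eb_orbit_formula L N M ε k o o_succ r
    rw [← ebVbar_eq L N M ε k r hr] at hform
    have hA : (ebProd L N M ε k 1 r).mulVec (z 0) = z 0 - ebVbar L N M ε k r := by
      have h := hz0
      rw [Matrix.sub_mulVec, Matrix.one_mulVec] at h
      have := sub_eq_iff_eq_add.1 h
      rw [this]; abel
    rw [o_zero] at hform ⊢
    rw [hform, hA]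
    abel
  obtain ⟨hx, hy⟩ := eb_key L hL r hr N M hN hM ε hε k hk2 1 (by norm_num) o
    (fun j _ => by rw [one_smul]) hper
  have hbd : 2 * |(1:ℝ)| / (L * k) = (2/L) / (k:ℝ) := by
    rw [abs_one, mul_one, div_div]
  intro j hj
  have hmod1 : (2 * j) % (2 * r) = 2 * j := Nat.mod_eq_of_lt (by omega)
  -- x-coordinate bound
  have hxj := hx j hj
  rw [hoz j hj, hbd, one_mul] at hxj
  have goal1 : |z j 0 - ε ((2 * j) % (2 * r)) * (1 - 1 / (2 * |(N (j + 1) : ℝ)|))|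
      ≤ (2/L) / (k:ℝ) := by rw [hmod1]; exact hxj
  refine ⟨goal1, ?_, ?_⟩
  · -- y-coordinate bound
    rcases Nat.eq_zero_or_pos j with rfl | hj1
    · have hyr := hy r hr (le_refl r)
      rw [hper, o_zero, hbd, one_mul] at hyr
      have hmod2 : (2 * 0 + 2 * r - 1) % (2 * r) = 2 * r - 1 := by
        have h1 : 2 * 0 + 2 * r - 1 = 2 * r - 1 := by omega
        rw [h1]
        exact Nat.mod_eq_of_lt (by omega)
      rw [hmod2]
      rw [if_pos rfl]
      have harg : z 0 1 - -ε (2 * r - 1) * (1 - 1 / (2 * |(M r : ℝ)|))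
          = z 0 1 + ε (2 * r - 1) * (1 - 1 / (2 * |(M r : ℝ)|)) := by ring
      rw [harg]
      exact hyr
    · have hyj := hy j hj1 (le_of_lt hj)
      rw [hoz j hj, hbd, one_mul] at hyj
      have hmod2 : (2 * j + 2 * r - 1) % (2 * r) = 2 * j - 1 := by
        have h1 : 2 * j + 2 * r - 1 = (2 * j - 1) + 2 * r := by omega
        rw [h1, Nat.add_mod_right]
        exact Nat.mod_eq_of_lt (by omega)
      rw [hmod2, if_neg (by omega)]
      have harg : z j 1 - -ε (2 * j - 1) * (1 - 1 / (2 * |(M j : ℝ)|))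
          = z j 1 + ε (2 * j - 1) * (1 - 1 / (2 * |(M j : ℝ)|)) := by ring
      rw [harg]
      exact hyj
  · -- sign
    rw [hmod1]
    have hN1 : (1:ℝ) ≤ |(N (j + 1) : ℝ)| := by
      have h := hN (j + 1) (by omega) (by omega)
      have h2 : (1 : ℤ) ≤ |N (j + 1)| := Int.one_le_abs h
      calc (1:ℝ) ≤ ((|N (j + 1)| : ℤ) : ℝ) := by exact_mod_cast h2
      _ = |(N (j + 1) : ℝ)| := by push_cast; ring
    have hnu1 : 1 / (2 * |(N (j + 1) : ℝ)|) ≤ 1/2 := by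
      rw [div_le_div_iff₀ (by linarith) (by norm_num)]
      nlinarith
    have hnu0 : 0 < 1 / (2 * |(N (j + 1) : ℝ)|) := by positivity
    have h25 : (2/L) / (k:ℝ) ≤ 2/5 := by
      rw [div_div, div_le_div_iff₀ hLk (by norm_num)]
      nlinarith
    have hb := abs_le.1 (le_trans hxj h25)
    rcases hε (2 * j) with he | he
    · rw [he] at hb ⊢
      have : 0 < z j 0 := by
        obtain ⟨hb1, _⟩ := hb
        nlinarith
      rw [Real.sign_of_pos this]
    · rw [he] at hb ⊢
      have : z j 0 < 0 := by
        obtain ⟨_, hb2⟩ := hb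
        nlinarith
      rw [Real.sign_of_neg this]
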